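/- For every t >= 5, if X1, ..., Xt are pairwise disjoint nonempty vertex subsets of CQ_3 whose union is the whole vertex set, then the sum over all pairs 1 <= i < j <= t of e(X_i, X_j) is at least 8. -/

import Mathlib

/-!
`CQ_3` is 3-edge-connected: every cut `∂(X)` with `∅ ≠ X ≠ V` has at least 3 edges (an exhaustive
check over the `2^8` vertex sets). Summing the cuts of the `t` parts counts every crossing edge
twice, so twice the crossing count is at least `3t ≥ 15`.
-/

/-- Vertices of the 3-dimensional cubes: binary strings `x1x2x3` of length 3. -/
abbrev Vtx3 := Bool × Bool × Bool

/-- The 12 edges of the 3-dimensional crossed cube `CQ_3`. -/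
def cq3EdgeList : List (Vtx3 × Vtx3) :=
  [ ((false,false,false),(false,false,true)),
    ((false,true,false),(false,true,true)),
    ((true,false,false),(true,false,true)),
    ((true,true,false),(true,true,true)),
    ((false,false,false),(false,true,false)),
    ((false,false,true),(false,true,true)),
    ((true,false,false),(true,true,false)),
    ((true,false,true),(true,true,true)),
    ((false,false,false),(true,false,false)),
    ((false,true,false),(true,true,false)),
    ((false,false,true),(true,true,true)),
    ((false,true,true),(true,false,true)) ]

/-- The 3-dimensional crossed cube `CQ_3`. -/
def CQ3 : SimpleGraph Vtx3 where
  Adj u v := (u, v) ∈ cq3EdgeList ∨ (v, u) ∈ cq3EdgeList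
  symm := ⟨fun _ _ h => Or.symm h⟩
  loopless := ⟨by
    intro x
    revert x
    decide⟩

instance : DecidableRel CQ3.Adj :=
  fun u v => inferInstanceAs (Decidable ((u, v) ∈ cq3EdgeList ∨ (v, u) ∈ cq3EdgeList))

/-- `e(X, Y)`: the number of edges of `CQ_3` with one end in `X` and the
other end in `Y` (for disjoint `X`, `Y`). -/
def eXY (X Y : Finset Vtx3) : ℕ :=
  (Finset.univ.filter fun p : Vtx3 × Vtx3 => p.1 ∈ X ∧ p.2 ∈ Y ∧ CQ3.Adj p.1 p.2).card

open Finset Function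

lemma sum_sum_erase_eq_two_nsmul_sum_sum_lt {ι M : Type*} [Fintype ι] [LinearOrder ι]
    [AddCommMonoid M] (f : ι → ι → M) (hf : ∀ i j, f i j = f j i) :
    ∑ i, ∑ j ∈ univ.erase i, f i j = 2 • ∑ i, ∑ j, if i < j then f i j else 0 := by
  have hsplit : ∀ i, ∑ j ∈ univ.erase i, f i j
      = ∑ j, ((if i < j then f i j else 0) + if j < i then f i j else 0) := by
    intro i
    rw [← filter_ne', sum_filter]
    refine sum_congr rfl fun j _ => ?_
    rcases lt_trichotomy i j with h | rfl | h
    · simp [h, h.ne', not_lt_of_gt h]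
    · simp
    · simp [h, h.ne, not_lt_of_gt h]
  have hswap : ∑ i, ∑ j, (if j < i then f i j else 0)
      = ∑ i, ∑ j, if i < j then f i j else 0 := by
    rw [sum_comm]
    simp_rw [hf]
  simp only [hsplit, sum_add_distrib, hswap, two_nsmul]

lemma compl_eq_biUnion_erase {α ι : Type*} [Fintype α] [DecidableEq α] [Fintype ι]
    [DecidableEq ι] (X : ι → Finset α) (hdisj : Pairwise (Disjoint on X))
    (hunion : univ.biUnion X = univ) (i : ι) :
    (X i)ᶜ = (univ.erase i).biUnion X := by
  ext v
  simp only [mem_compl, mem_biUnion, mem_erase, mem_univ, and_true]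
  constructor
  · intro hvi
    obtain ⟨j, -, hvj⟩ := mem_biUnion.mp (hunion ▸ mem_univ v : v ∈ univ.biUnion X)
    exact ⟨j, fun hji => hvi (hji ▸ hvj), hvj⟩
  · rintro ⟨j, hji, hvj⟩ hvi
    exact disjoint_left.mp (hdisj hji) hvj hvi

lemma eXY_comm (X Y : Finset Vtx3) : eXY X Y = eXY Y X := by
  unfold eXY
  refine card_equiv (Equiv.prodComm Vtx3 Vtx3) fun p => ?_
  simp only [mem_filter, mem_univ, true_and, Equiv.prodComm_apply, Prod.fst_swap, Prod.snd_swap,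
    CQ3.adj_comm p.1]
  tauto

lemma eXY_biUnion {ι : Type*} (X : Finset Vtx3) (s : Finset ι) (Y : ι → Finset Vtx3)
    (hY : (s : Set ι).PairwiseDisjoint Y) :
    eXY X (s.biUnion Y) = ∑ j ∈ s, eXY X (Y j) := by
  classical
  unfold eXY
  rw [← card_biUnion]
  · congr 1
    ext p
    simp only [mem_filter, mem_univ, true_and, mem_biUnion]
    tauto
  · intro i hi j hj hij
    simp only [disjoint_left, mem_filter, mem_univ, true_and]
    exact fun p hp hq => disjoint_left.mp (hY hi hj hij) hp.2.1 hq.2.1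

set_option maxRecDepth 10000 in
lemma three_le_eXY_compl (X : Finset Vtx3) (hX : X.Nonempty) (hXc : Xᶜ.Nonempty) :
    3 ≤ eXY X Xᶜ := by
  revert X; decide

/-- For every `t ≥ 5`, any partition of `V(CQ_3)` into `t` pairwise disjoint
nonempty parts has total crossing count at least 8. -/
theorem cq3_many_parts (t : ℕ) (ht : 5 ≤ t) (X : Fin t → Finset Vtx3)
    (hdisj : ∀ i j, i ≠ j → Disjoint (X i) (X j))
    (hne : ∀ i, (X i).Nonempty)
    (hunion : Finset.univ.biUnion X = Finset.univ) :
    8 ≤ ∑ i : Fin t, ∑ j : Fin t, if i < j then eXY (X i) (X j) else 0 := by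
  have hboundary : ∀ i, eXY (X i) (X i)ᶜ = ∑ j ∈ univ.erase i, eXY (X i) (X j) := fun i => by
    rw [compl_eq_biUnion_erase X hdisj hunion i, eXY_biUnion _ _ _ (Pairwise.set_pairwise hdisj _)]
  have hthree : ∀ i, 3 ≤ eXY (X i) (X i)ᶜ := fun i => by
    have : Nontrivial (Fin t) := Fin.nontrivial_iff_two_le.mpr (by omega)
    obtain ⟨j, hji⟩ := exists_ne i
    have hXj : X j ⊆ (X i)ᶜ := le_compl_iff_disjoint_right.mpr (hdisj j i hji)
    exact three_le_eXY_compl _ (hne i) ((hne j).mono hXj)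
  have htotal : 3 * t ≤ 2 * ∑ i : Fin t, ∑ j : Fin t, if i < j then eXY (X i) (X j) else 0 := by
    calc 3 * t = ∑ _i : Fin t, 3 := by simp [mul_comm]
      _ ≤ ∑ i, eXY (X i) (X i)ᶜ := sum_le_sum fun i _ => hthree i
      _ = ∑ i, ∑ j ∈ univ.erase i, eXY (X i) (X j) := sum_congr rfl fun i _ => hboundary i
      _ = _ := sum_sum_erase_eq_two_nsmul_sum_sum_lt _ fun i j => eXY_comm _ _
  omega
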